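/- arXiv:1204.3439 — 6 statements merged into one kernel-verified Lean document; each statement's English description precedes it below -/
import Mathlib

section
/- Let d ≥ 1 and let f : ℕ → ℕ be strictly increasing such that for every m ∈ ℕ there exists n ∈ ℕ with m ∣ f(n). Let L be the language over the alphabet Fin d consisting of all finite words w such that w_i ≠ w_{i+f(n)} whenever both indices lie within w (for all positions i and all n ∈ ℕ). If L contains arbitrarily long words, then L is not context-free (in particular, not regular). -/
/-!
A context-free language with arbitrarily long words can be pumped. Take a parse tree of a long
word of minimal size and walk down from the root, always into a child with a long yield: since
every node has at most `R` children (`R` bounding the right-hand sides), a yield longer than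
`R ^ k` cannot be produced by a tree with at most `k` distinct nonterminals without some
nonterminal `B` repeating below itself. This gives derivations `S ⇒* u B z`, `B ⇒* v B y` and
`B ⇒* x`, and minimality forces `v y ≠ []`. Hence, for a fixed nonempty word `p` (namely `v` or
`y`), every power `p ^ k` occurs as a factor of a word of the language.

The exclusion rule passes to factors, but `p ^ (t + 1)` breaks it at positions `0` and `f n`
as soon as `f n = |p| t`, which the divisibility hypothesis provides for `m = |p|`.
-/

/-- A finite word `w` over the alphabet `Fin d` satisfies the exclusion rule for the
jump sequence `f` if `w_i ≠ w_{i+f n}` for all positions `i` and all `n ≥ 1` such that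
both indices lie within `w`. -/
def ExclusionWord {d : ℕ} (f : ℕ → ℕ) (w : List (Fin d)) : Prop :=
  ∀ (n : ℕ), 1 ≤ n → ∀ (i : ℕ) (h : i + f n < w.length),
    w.get ⟨i, Nat.lt_of_le_of_lt (Nat.le_add_right i (f n)) h⟩ ≠ w.get ⟨i + f n, h⟩

variable {T : Type*}

namespace ContextFreeGrammar

variable {g : ContextFreeGrammar T}

lemma Derives.append {u u' v v' : List (Symbol T g.NT)} (hu : g.Derives u u')
    (hv : g.Derives v v') : g.Derives (u ++ v) (u' ++ v') :=
  (hu.append_right v).trans (hv.append_left u')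

lemma Derives.flatMap {α : Type*} {l : List α} {p q : α → List (Symbol T g.NT)}
    (h : ∀ a ∈ l, g.Derives (p a) (q a)) : g.Derives (l.flatMap p) (l.flatMap q) := by
  induction l with
  | nil => exact Derives.refl _
  | cons a l ih =>
    simp only [List.flatMap_cons]
    exact (h a List.mem_cons_self).append (ih fun b hb => h b (List.mem_cons_of_mem a hb))

def Pumps (g : ContextFreeGrammar T) (s : Symbol T g.NT) (u v x y z : List T) : Prop :=
  ∃ B : g.NT, g.Derives [s] (u.map .terminal ++ [.nonterminal B] ++ z.map .terminal) ∧
    g.Derives [.nonterminal B] (v.map .terminal ++ [.nonterminal B] ++ y.map .terminal) ∧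
    g.Derives [.nonterminal B] (x.map .terminal)

lemma Pumps.of_derives {s s' : Symbol T g.NT} {p q u v x y z : List T}
    (h : g.Derives [s'] (p.map .terminal ++ [s] ++ q.map .terminal)) (hs : g.Pumps s u v x y z) :
    g.Pumps s' (p ++ u) v x y (z ++ q) := by
  obtain ⟨B, hsB, hloop, hx⟩ := hs
  refine ⟨B, ?_, hloop, hx⟩
  simpa using h.trans (((Derives.refl _).append hsB).append (Derives.refl _))

lemma derives_replicate_of_loop {B : g.NT} {v y : List T}
    (h : g.Derives [.nonterminal B] (v.map .terminal ++ [.nonterminal B] ++ y.map .terminal))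
    (k : ℕ) :
    g.Derives [.nonterminal B] ((List.replicate k v).flatten.map .terminal ++ [.nonterminal B] ++
      (List.replicate k y).flatten.map .terminal) := by
  induction k with
  | zero => simpa using Derives.refl (g := g) [.nonterminal B]
  | succ k ih =>
    have := h.trans (((Derives.refl _).append ih).append (Derives.refl _))
    rw [List.replicate_succ, List.replicate_succ' (a := y)]
    simpa using this

lemma Pumps.derives {s : Symbol T g.NT} {u v x y z : List T} (h : g.Pumps s u v x y z) (k : ℕ) :
    g.Derives [s] ((u ++ (List.replicate k v).flatten ++ x ++ (List.replicate k y).flatten ++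
      z).map .terminal) := by
  obtain ⟨B, hsB, hloop, hx⟩ := h
  have hB : g.Derives [.nonterminal B] ((List.replicate k v).flatten.map .terminal ++
      x.map .terminal ++ (List.replicate k y).flatten.map .terminal) :=
    (derives_replicate_of_loop hloop k).trans (((Derives.refl _).append hx).append (Derives.refl _))
  simpa using hsB.trans (((Derives.refl _).append hB).append (Derives.refl _))

end ContextFreeGrammar

inductive ParseTree (T N : Type*) where
  | leaf : T → ParseTree T N
  | node : N → List (ParseTree T N) → ParseTree T N

namespace ParseTree

section Basic

variable {N : Type*}

def root : ParseTree T N → Symbol T N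
  | leaf a => .terminal a
  | node A _ => .nonterminal A

def yield : ParseTree T N → List T
  | leaf a => [a]
  | node _ cs => cs.flatMap yield

def size : ParseTree T N → ℕ
  | leaf _ => 1
  | node _ cs => (cs.map size).sum + 1

def nonterminals : ParseTree T N → List N
  | leaf _ => []
  | node A cs => A :: cs.flatMap nonterminals

lemma size_lt_size_node {A : N} {c : ParseTree T N} {cs : List (ParseTree T N)} (hc : c ∈ cs) :
    c.size < (node A cs).size := by
  have := List.le_sum_of_mem (List.mem_map_of_mem (f := size) hc)
  simp only [size]
  omega

lemma exists_eq_node_of_one_lt_length_yield {t : ParseTree T N}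
    (h : 1 < t.yield.length) : ∃ A cs, t = node A cs := by
  cases t with
  | leaf a => simp [yield] at h
  | node A cs => exact ⟨A, cs, rfl⟩

end Basic

inductive IsValid (g : ContextFreeGrammar T) : ParseTree T g.NT → Prop
  | leaf (a : T) : IsValid g (leaf a)
  | node (r : ContextFreeRule T g.NT) (cs : List (ParseTree T g.NT)) (hr : r ∈ g.rules)
      (hroots : cs.map root = r.output) (hcs : ∀ c ∈ cs, IsValid g c) :
      IsValid g (node r.input cs)

open ContextFreeGrammar

variable {g : ContextFreeGrammar T}

lemma IsValid.derives {t : ParseTree T g.NT} (ht : t.IsValid g) :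
    g.Derives [t.root] (t.yield.map .terminal) := by
  induction ht with
  | leaf a => simpa [root, yield] using Derives.refl (g := g) [.terminal a]
  | node r cs hr hroots _ ih =>
    have hstep : g.Produces [.nonterminal r.input] (cs.flatMap fun c => [c.root]) := by
      rw [← List.map_eq_flatMap, hroots]
      exact ⟨r, hr, .input_output⟩
    simpa [root, yield, List.map_flatMap] using hstep.trans_derives (Derives.flatMap ih)

lemma derives_of_forall_isValid {cs : List (ParseTree T g.NT)} (hcs : ∀ c ∈ cs, c.IsValid g) :
    g.Derives (cs.map root) ((cs.flatMap yield).map .terminal) := by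
  rw [List.map_flatMap, List.map_eq_flatMap (f := root)]
  exact Derives.flatMap fun c hc => (hcs c hc).derives

lemma isValid_node_iff {A : g.NT} {cs : List (ParseTree T g.NT)} :
    (ParseTree.node A cs).IsValid g ↔
      ∃ r ∈ g.rules, r.input = A ∧ cs.map root = r.output ∧ ∀ c ∈ cs, c.IsValid g := by
  constructor
  · rintro ⟨⟩
    rename_i r hr hroots hcs
    exact ⟨r, hr, rfl, hroots, hcs⟩
  · rintro ⟨r, hr, rfl, hroots, hcs⟩
    exact .node r cs hr hroots hcs

lemma IsValid.derives_child {A : g.NT} {cs₁ cs₂ : List (ParseTree T g.NT)}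
    {c : ParseTree T g.NT} (h : (ParseTree.node A (cs₁ ++ c :: cs₂)).IsValid g) :
    g.Derives [.nonterminal A]
      ((cs₁.flatMap yield).map .terminal ++ [c.root] ++ (cs₂.flatMap yield).map .terminal) := by
  obtain ⟨r, hr, rfl, hroots, hcs⟩ := isValid_node_iff.mp h
  have hstep : g.Produces [.nonterminal r.input] ((cs₁ ++ c :: cs₂).map root) := by
    rw [hroots]
    exact ⟨r, hr, .input_output⟩
  have hsides := (derives_of_forall_isValid (cs := cs₁) fun d hd => hcs d (by simp [hd])).append
    ((Derives.refl [c.root]).append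
      (derives_of_forall_isValid (cs := cs₂) fun d hd => hcs d (by simp [hd])))
  rw [List.map_append, List.map_cons] at hstep
  simpa only [List.append_assoc] using hstep.trans_derives hsides

lemma exists_forest_of_derives {α : List (Symbol T g.NT)} {w : List T}
    (h : g.Derives α (w.map .terminal)) :
    ∃ ts : List (ParseTree T g.NT), ts.map root = α ∧ (∀ t ∈ ts, t.IsValid g) ∧
      ts.flatMap yield = w := by
  induction h using Relation.ReflTransGen.head_induction_on with
  | refl => exact ⟨w.map leaf, by simp [Function.comp_def, root], by simp [IsValid.leaf],
      by simp [List.flatMap_map, yield]⟩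
  | head hstep _ ih =>
    obtain ⟨ts, hroots, hvalid, rfl⟩ := ih
    obtain ⟨r, hr, hrw⟩ := hstep
    obtain ⟨p, q, rfl, hout⟩ := hrw.exists_parts
    rw [hout, List.append_assoc] at hroots
    obtain ⟨ts₁, ts', rfl, rfl, hm'⟩ := List.map_eq_append_iff.mp hroots
    obtain ⟨ts₂, ts₃, rfl, hm₂, rfl⟩ := List.map_eq_append_iff.mp hm'
    refine ⟨ts₁ ++ node r.input ts₂ :: ts₃, by simp [root], ?_, by simp [yield]⟩
    intro t ht
    simp only [List.mem_append, List.mem_cons] at hvalid ht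
    rcases ht with ht | rfl | ht
    · exact hvalid t (.inl ht)
    · exact .node r ts₂ hr hm₂ fun c hc => hvalid c (.inr (.inl hc))
    · exact hvalid t (.inr (.inr ht))

lemma exists_isValid_of_mem_language {w : List T} (hw : w ∈ g.language) :
    ∃ t : ParseTree T g.NT, t.IsValid g ∧ t.root = .nonterminal g.initial ∧ t.yield = w := by
  obtain ⟨ts, hroots, hvalid, rfl⟩ := exists_forest_of_derives ((g.mem_language_iff w).mp hw)
  obtain ⟨t, rfl, hroot⟩ := List.map_eq_singleton_iff.mp hroots
  exact ⟨t, hvalid t (List.mem_singleton_self t), hroot, by simp⟩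

lemma IsValid.exists_subtree {t : ParseTree T g.NT} (ht : t.IsValid g) {A : g.NT}
    (hA : A ∈ t.nonterminals) :
    ∃ (s : ParseTree T g.NT) (p q : List T), s.IsValid g ∧ s.root = .nonterminal A ∧
      s.size ≤ t.size ∧ t.yield = p ++ s.yield ++ q ∧
      g.Derives [t.root] (p.map .terminal ++ [.nonterminal A] ++ q.map .terminal) := by
  induction ht with
  | leaf a => simp [nonterminals] at hA
  | node r cs hr hroots hcs ih =>
    simp only [nonterminals, List.mem_cons, List.mem_flatMap] at hA
    rcases hA with rfl | ⟨c, hc, hAc⟩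
    · exact ⟨_, [], [], .node r cs hr hroots hcs, rfl, le_rfl, by simp,
        by simpa [root] using Derives.refl (g := g) [.nonterminal r.input]⟩
    · obtain ⟨s, p, q, hs, hroot, hsize, hyield, hder⟩ := ih c hc hAc
      obtain ⟨cs₁, cs₂, rfl⟩ := List.append_of_mem hc
      refine ⟨s, cs₁.flatMap yield ++ p, q ++ cs₂.flatMap yield, hs, hroot,
        hsize.trans (size_lt_size_node hc).le, by simp [yield, hyield], ?_⟩
      have hchild := (IsValid.node r _ hr hroots hcs).derives_child
      simpa [root] using hchild.trans (((Derives.refl _).append hder).append (Derives.refl _))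

lemma IsValid.exists_rule_of_mem_nonterminals {t : ParseTree T g.NT} (ht : t.IsValid g)
    {A : g.NT} (hA : A ∈ t.nonterminals) : ∃ r ∈ g.rules, r.input = A := by
  obtain ⟨s, -, -, hs, hroot, -⟩ := ht.exists_subtree hA
  cases s with
  | leaf a => simp [root] at hroot
  | node B cs =>
    obtain ⟨r, hr, rfl, -⟩ := isValid_node_iff.mp hs
    exact ⟨r, hr, by simpa [root] using hroot⟩

def IsMinimal (g : ContextFreeGrammar T) (t : ParseTree T g.NT) : Prop :=
  ∀ s : ParseTree T g.NT,
    s.IsValid g → s.root = t.root → s.yield = t.yield → t.size ≤ s.size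

lemma IsValid.exists_isMinimal {t : ParseTree T g.NT} (ht : t.IsValid g) :
    ∃ s : ParseTree T g.NT,
      s.IsValid g ∧ s.IsMinimal g ∧ s.root = t.root ∧ s.yield = t.yield := by
  obtain ⟨s, ⟨hs, hroot, hyield⟩, hmin⟩ := (measure size).wf.has_min
    {s | s.IsValid g ∧ s.root = t.root ∧ s.yield = t.yield} ⟨t, ht, rfl, rfl⟩
  refine ⟨s, hs, fun s' hs' hroot' hyield' => ?_, hroot, hyield⟩
  exact not_lt.mp (hmin s' ⟨hs', hroot'.trans hroot, hyield'.trans hyield⟩)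

lemma IsMinimal.child {A : g.NT} {cs₁ cs₂ : List (ParseTree T g.NT)} {c : ParseTree T g.NT}
    (hv : (ParseTree.node A (cs₁ ++ c :: cs₂)).IsValid g)
    (hm : (ParseTree.node A (cs₁ ++ c :: cs₂)).IsMinimal g) : c.IsMinimal g := by
  intro s hs hroot hyield
  obtain ⟨r, hr, rfl, hroots, hcs⟩ := isValid_node_iff.mp hv
  have hv' : (ParseTree.node r.input (cs₁ ++ s :: cs₂)).IsValid g := by
    refine .node r _ hr (by simpa [hroot] using hroots) fun d hd => ?_
    simp only [List.mem_append, List.mem_cons] at hd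
    rcases hd with hd | rfl | hd
    · exact hcs d (by simp [hd])
    · exact hs
    · exact hcs d (by simp [hd])
  have := hm _ hv' rfl (by simp [yield, hyield])
  simp only [size, List.map_append, List.map_cons, List.sum_append, List.sum_cons] at this
  omega

lemma IsValid.exists_long_child {A : g.NT} {cs : List (ParseTree T g.NT)} {R M : ℕ}
    (hrules : ∀ r ∈ g.rules, r.output.length ≤ R) (ht : (ParseTree.node A cs).IsValid g)
    (hlong : R * M < (ParseTree.node A cs).yield.length) : ∃ c ∈ cs, M < c.yield.length := by
  obtain ⟨r, hr, rfl, hroots, -⟩ := isValid_node_iff.mp ht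
  by_contra! hshort
  have hlen : cs.length ≤ R := by simpa [← hroots] using hrules r hr
  have hsum : (ParseTree.node r.input cs).yield.length ≤ cs.length * M := by
    simpa [yield, List.length_flatMap] using
      List.sum_le_card_nsmul (cs.map fun c => c.yield.length) M (by simpa using hshort)
  have := Nat.mul_le_mul_right M hlen
  omega

lemma IsValid.pumps_of_mem_nonterminals_child {A : g.NT} {cs₁ cs₂ : List (ParseTree T g.NT)}
    {c : ParseTree T g.NT} (ht : (ParseTree.node A (cs₁ ++ c :: cs₂)).IsValid g)
    (hmin : (ParseTree.node A (cs₁ ++ c :: cs₂)).IsMinimal g) (hA : A ∈ c.nonterminals) :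
    ∃ u v x y z, v ++ y ≠ [] ∧ g.Pumps (.nonterminal A) u v x y z := by
  obtain ⟨-, -, -, -, hcs⟩ := isValid_node_iff.mp ht
  obtain ⟨s, p, q, hs, hroot, hsize, hyield, hder⟩ := (hcs c (by simp)).exists_subtree hA
  refine ⟨[], cs₁.flatMap yield ++ p, s.yield, q ++ cs₂.flatMap yield, [], ?_, A,
    by simpa using Derives.refl (g := g) [.nonterminal A], ?_, by simpa [hroot] using hs.derives⟩
  · intro hnil
    simp only [List.append_eq_nil_iff] at hnil
    have := hmin s hs hroot (by simp [yield, hyield, hnil])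
    have := size_lt_size_node (A := A) (c := c) (cs := cs₁ ++ c :: cs₂) (by simp)
    omega
  · simpa using ht.derives_child.trans (((Derives.refl _).append hder).append (Derives.refl _))

theorem IsValid.pumps_of_isMinimal [DecidableEq g.NT] {R : ℕ} (hR : 0 < R)
    (hrules : ∀ r ∈ g.rules, r.output.length ≤ R) {k : ℕ} {t : ParseTree T g.NT}
    (ht : t.IsValid g) (hmin : t.IsMinimal g) (hcard : t.nonterminals.toFinset.card ≤ k)
    (hlong : R ^ k < t.yield.length) :
    ∃ u v x y z, v ++ y ≠ [] ∧ g.Pumps t.root u v x y z := by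
  obtain ⟨A, cs, rfl⟩ := exists_eq_node_of_one_lt_length_yield
    ((Nat.one_le_pow k R hR).trans_lt hlong)
  induction k generalizing A cs with
  | zero =>
    have : 0 < (ParseTree.node A cs).nonterminals.toFinset.card :=
      Finset.card_pos.mpr ⟨A, by simp [nonterminals]⟩
    omega
  | succ k ih =>
    rw [pow_succ'] at hlong
    obtain ⟨c, hc, hlongc⟩ := ht.exists_long_child hrules hlong
    obtain ⟨cs₁, cs₂, rfl⟩ := List.append_of_mem hc
    by_cases hA : A ∈ c.nonterminals
    · exact ht.pumps_of_mem_nonterminals_child hmin hA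
    · have hsub : c.nonterminals.toFinset ⊆
          (ParseTree.node A (cs₁ ++ c :: cs₂)).nonterminals.toFinset.erase A := by
        intro B hB
        rw [List.mem_toFinset] at hB
        refine Finset.mem_erase.mpr ⟨fun h => hA (h ▸ hB), ?_⟩
        simp [nonterminals, hB]
      have hcard' : c.nonterminals.toFinset.card ≤ k := by
        have := Finset.card_le_card hsub
        rw [Finset.card_erase_of_mem (by simp [nonterminals])] at this
        omega
      obtain ⟨-, -, -, -, hcs⟩ := isValid_node_iff.mp ht
      obtain ⟨B, cs', rfl⟩ := exists_eq_node_of_one_lt_length_yield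
        ((Nat.one_le_pow k R hR).trans_lt hlongc)
      obtain ⟨u, v, x, y, z, hvy, hpumps⟩ := ih B cs' (hcs _ hc) (hmin.child ht) hcard' hlongc
      exact ⟨_, v, x, y, _, hvy, hpumps.of_derives ht.derives_child⟩

end ParseTree

namespace ContextFreeGrammar

open ParseTree

variable {g : ContextFreeGrammar T}

theorem exists_pumping (h : ∀ N, ∃ w ∈ g.language, N ≤ w.length) :
    ∃ u v x y z : List T, v ++ y ≠ [] ∧
      ∀ k, u ++ (List.replicate k v).flatten ++ x ++ (List.replicate k y).flatten ++ z ∈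
        g.language := by
  classical
  set R := g.rules.sup (fun r => r.output.length) + 1
  have hrules : ∀ r ∈ g.rules, r.output.length ≤ R :=
    fun r hr => (Finset.le_sup (f := fun r => r.output.length) hr).trans (Nat.le_succ _)
  set P := (g.rules.image ContextFreeRule.input).card
  obtain ⟨w, hw, hlong⟩ := h (R ^ P + 1)
  obtain ⟨t, ht, hroot, rfl⟩ := exists_isValid_of_mem_language hw
  obtain ⟨s, hs, hmin, hroot', hyield⟩ := ht.exists_isMinimal
  have hcard : s.nonterminals.toFinset.card ≤ P := Finset.card_le_card fun A hA => by
    obtain ⟨r, hr, rfl⟩ := hs.exists_rule_of_mem_nonterminals (List.mem_toFinset.mp hA)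
    exact Finset.mem_image_of_mem _ hr
  obtain ⟨u, v, x, y, z, hvy, hpumps⟩ :=
    hs.pumps_of_isMinimal (Nat.succ_pos _) hrules hmin hcard (hyield ▸ hlong)
  refine ⟨u, v, x, y, z, hvy, fun k => (g.mem_language_iff _).mpr ?_⟩
  simpa [hroot', hroot] using hpumps.derives k

end ContextFreeGrammar

theorem Language.IsContextFree.exists_flatten_replicate_infix {L : Language T}
    (hL : L.IsContextFree) (h : ∀ N, ∃ w ∈ L, N ≤ w.length) :
    ∃ p : List T, p ≠ [] ∧ ∀ k, ∃ w ∈ L, (List.replicate k p).flatten <:+: w := by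
  obtain ⟨g, rfl⟩ := hL
  obtain ⟨u, v, x, y, z, hvy, hmem⟩ := g.exists_pumping h
  by_cases hv : v = []
  · subst hv
    exact ⟨y, by simpa using hvy, fun k => ⟨_, hmem k, u ++ x, z, by simp⟩⟩
  · exact ⟨v, hv, fun k => ⟨_, hmem k, u, x ++ (List.replicate k y).flatten ++ z, by simp⟩⟩

section ExclusionWord

variable {d : ℕ} {f : ℕ → ℕ}

lemma ExclusionWord.of_infix {u w : List (Fin d)} (hw : ExclusionWord f w) (h : u <:+: w) :
    ExclusionWord f u := by
  obtain ⟨s, r, rfl⟩ := h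
  intro n hn i hi
  have hi' : i < u.length := by omega
  have := hw n hn (s.length + i) (by simp only [List.length_append]; omega)
  simpa [List.getElem_append_right, List.getElem_append_left hi', hi, Nat.add_assoc] using this

lemma not_exclusionWord_flatten_replicate {p : List (Fin d)} (hp : p ≠ []) {n t : ℕ}
    (hn : 1 ≤ n) (hfn : f n = p.length * t) :
    ¬ ExclusionWord f (List.replicate (t + 1) p).flatten := by
  have hpos : 0 < p.length := List.length_pos_iff.mpr hp
  intro h
  refine h n hn 0 (by
    simp only [hfn, zero_add, List.length_flatten, List.map_replicate, List.sum_replicate,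
      smul_eq_mul]
    nlinarith) ?_
  have hfirst : (List.replicate (t + 1) p).flatten[0]? = p[0]? := by
    simp [List.replicate_succ, List.getElem?_append_left hpos]
  have hlast : (List.replicate (t + 1) p).flatten[f n]? = p[0]? := by
    rw [List.replicate_succ', List.flatten_append,
      List.getElem?_append_right (by simp [hfn, mul_comm])]
    simp [hfn, mul_comm]
  simp only [List.get_eq_getElem, zero_add]
  rw [← Option.some_inj, ← List.getElem?_eq_getElem, ← List.getElem?_eq_getElem, hfirst,
    hlast]

end ExclusionWord

theorem exclusion_language_not_context_free_general
    (d : ℕ) (f : ℕ → ℕ)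
    (hdiv : ∀ m : ℕ, 1 ≤ m → ∃ n : ℕ, 1 ≤ n ∧ m ∣ f n)
    (L : Language (Fin d)) (hL : L = {w | ExclusionWord f w})
    (hlong : ∀ N : ℕ, ∃ w ∈ L, N ≤ w.length) :
    ¬ L.IsContextFree := by
  intro hcf
  obtain ⟨p, hp, hpowers⟩ := hcf.exists_flatten_replicate_infix hlong
  obtain ⟨n, hn, t, hfn⟩ := hdiv p.length (List.length_pos_iff.mpr hp)
  obtain ⟨w, hw, hinfix⟩ := hpowers (t + 1)
  rw [hL] at hw
  exact not_exclusionWord_flatten_replicate hp hn hfn (hw.of_infix hinfix)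

/-- let `d ≥ 1` and let `f : ℕ → ℕ` be strictly increasing such that every
`m ≥ 1` divides `f n` for some `n ≥ 1`. If the language of words over `Fin d`
satisfying the exclusion rule contains arbitrarily long words, then it is not
context-free (in particular not regular). -/
theorem exclusion_language_not_context_free
    (d : ℕ) (hd : 1 ≤ d) (f : ℕ → ℕ) (hf : StrictMono f)
    (hdiv : ∀ m : ℕ, 1 ≤ m → ∃ n : ℕ, 1 ≤ n ∧ m ∣ f n)
    (L : Language (Fin d)) (hL : L = {w | ExclusionWord f w})
    (hlong : ∀ N : ℕ, ∃ w ∈ L, N ≤ w.length) :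
    ¬ L.IsContextFree :=
  exclusion_language_not_context_free_general d f hdiv L hL hlong
end

section
/- (Katznelson) For every lacunary strictly increasing sequence f : ℕ → ℕ, i.e. one for which there exists ε > 0 with f(n+1) ≥ (1+ε)·f(n) for all n, there exists a finite d and a two-sided sequence x : ℤ → Fin d with x_i ≠ x_{i+f(n)} for all i ∈ ℤ and n ∈ ℕ; that is, X_{(d,f)} ≠ ∅ for some finite d. -/
/-!
Split the lacunary sequence into `N` interleaved subsequences, each growing at least by a factor
`3`. For a sequence `g` with `3 g k ≤ g (k+1)` nested intervals give an `α` with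
`fract (g k α) ∈ [1/4, 3/4]` for all `k`; colouring `i` by the quarter of `[0, 1)` containing
`fract (i α)` then separates `i` from `i + g k`. The product of the `N` four-colourings
separates `i` from `i + f n` for every `n`.
-/

open Set Int

/-- `x` is a proper colouring of the distance graph on `ℤ` with distance set `D`. -/
def IsDistanceColoring {α : Type*} (x : ℤ → α) (D : Set ℤ) : Prop :=
  ∀ i, ∀ d ∈ D, x i ≠ x (i + d)

namespace IsDistanceColoring

variable {α β ι : Type*} {x : ℤ → α} {D D' : Set ℤ}

theorem mono (h : IsDistanceColoring x D) (hD : D' ⊆ D) : IsDistanceColoring x D' :=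
  fun i d hd => h i d (hD hd)

theorem comp (h : IsDistanceColoring x D) {e : α → β} (he : Function.Injective e) :
    IsDistanceColoring (e ∘ x) D :=
  fun i d hd hx => h i d hd (he hx)

theorem pi {x : ι → ℤ → α} {D : ι → Set ℤ} (h : ∀ r, IsDistanceColoring (x r) (D r)) :
    IsDistanceColoring (fun i r => x r i) (⋃ r, D r) := by
  intro i d hd hx
  obtain ⟨r, hr⟩ := mem_iUnion.1 hd
  exact h r i d hr (congrFun hx r)

end IsDistanceColoring

theorem range_subset_iUnion_range_add_mul {β : Type*} (g : ℕ → β) {N : ℕ} (hN : 0 < N) :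
    range g ⊆ ⋃ r : Fin N, range fun k => g (r + N * k) := by
  rintro _ ⟨n, rfl⟩
  exact mem_iUnion.2 ⟨⟨n % N, Nat.mod_lt n hN⟩, n / N, congrArg g (Nat.mod_add_div n N)⟩

theorem exists_pos_forall_mul_le_add_of_lacunary {f : ℕ → ℝ} {ε : ℝ} (C : ℝ) (hf : ∀ n, 0 ≤ f n)
    (hε : 0 < ε) (hlac : ∀ n, (1 + ε) * f n ≤ f (n + 1)) (hC : 1 ≤ C) :
    ∃ N, 0 < N ∧ ∀ n, C * f n ≤ f (n + N) := by
  have hpow : ∀ n j, (1 + ε) ^ j * f n ≤ f (n + j) := by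
    intro n j
    induction j with
    | zero => simp
    | succ j ih =>
      calc (1 + ε) ^ (j + 1) * f n = (1 + ε) * ((1 + ε) ^ j * f n) := by ring
        _ ≤ (1 + ε) * f (n + j) := by gcongr
        _ ≤ f (n + (j + 1)) := hlac (n + j)
  obtain ⟨N, hN⟩ := pow_unbounded_of_one_lt C (lt_add_of_pos_right 1 hε)
  refine ⟨N, Nat.pos_of_ne_zero ?_, fun n => ?_⟩
  · rintro rfl
    rw [pow_zero] at hN
    linarith
  · exact (mul_le_mul_of_nonneg_right hN.le (hf n)).trans (hpow n N)

theorem fract_mul_mem_Icc_of_mem_Icc_div {g a : ℝ} {m : ℤ} (hg : 0 < g)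
    (ha : a ∈ Icc ((m + 1 / 4) / g) ((m + 3 / 4) / g)) :
    fract (g * a) ∈ Icc (1 / 4 : ℝ) (3 / 4) := by
  rw [mem_Icc, div_le_iff₀' hg, le_div_iff₀' hg] at ha
  have hfloor : ⌊g * a⌋ = m := by
    rw [floor_eq_iff]
    constructor <;> linarith
  rw [fract, hfloor, mem_Icc]
  constructor <;> linarith

theorem exists_Icc_div_subset_Icc {g a b : ℝ} (hg : 0 < g) (hab : 3 / 2 ≤ g * (b - a)) :
    ∃ m : ℤ, Icc ((m + 1 / 4) / g) ((m + 3 / 4) / g) ⊆ Icc a b := by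
  refine ⟨⌈g * a - 1 / 4⌉, Icc_subset_Icc ?_ ?_⟩
  · rw [le_div_iff₀' hg]
    linarith [le_ceil (g * a - 1 / 4)]
  · rw [div_le_iff₀' hg]
    linarith [ceil_lt_add_one (g * a - 1 / 4)]

theorem exists_forall_fract_mul_mem_Icc {g : ℕ → ℝ} (h0 : 0 < g 0)
    (hg : ∀ k, 3 * g k ≤ g (k + 1)) :
    ∃ a : ℝ, ∀ k, fract (g k * a) ∈ Icc (1 / 4 : ℝ) (3 / 4) := by
  have hpos : ∀ k, 0 < g k := Nat.rec h0 fun k hk => by linarith [hg k]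
  set J : ℕ → ℤ → Set ℝ := fun k m => Icc ((m + 1 / 4) / g k) ((m + 3 / 4) / g k)
  have hstep : ∀ k m, ∃ m', J (k + 1) m' ⊆ J k m := by
    intro k m
    refine exists_Icc_div_subset_Icc (hpos (k + 1)) ?_
    rw [← sub_div, show (m + 3 / 4 - (m + 1 / 4) : ℝ) = 1 / 2 by ring, ← mul_div_assoc,
      le_div_iff₀ (hpos k)]
    linarith [hg k]
  choose next hnext using hstep
  let m : ℕ → ℤ := fun k => Nat.rec 0 next k
  have hanti : Antitone fun k => J k (m k) := antitone_nat_of_succ_le fun k => hnext k (m k)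
  have hmem := ciSup_mem_iInter_Icc_of_antitone_Icc hanti fun k => by
    gcongr
    · exact (hpos k).le
    · norm_num
  exact ⟨_, fun k => fract_mul_mem_Icc_of_mem_Icc_div (hpos k) (mem_iInter.1 hmem k)⟩

theorem one_quarter_le_abs_of_fract_mem_Icc {t : ℝ} (ht : fract t ∈ Icc (1 / 4 : ℝ) (3 / 4)) :
    1 / 4 ≤ |t| := by
  by_contra! hlt
  rw [abs_lt] at hlt
  rw [fract, mem_Icc] at ht
  have hneg : ⌊t⌋ < 0 := by exact_mod_cast (show (⌊t⌋ : ℝ) < 0 by linarith)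
  have hgt : -1 < ⌊t⌋ := by exact_mod_cast (show (-1 : ℝ) < ⌊t⌋ by linarith)
  omega

theorem exists_fin_four_isDistanceColoring {a : ℝ} {D : Set ℤ}
    (hD : ∀ d ∈ D, fract (d * a) ∈ Icc (1 / 4 : ℝ) (3 / 4)) :
    ∃ x : ℤ → Fin 4, IsDistanceColoring x D := by
  refine ⟨fun i => ⟨⌊4 * fract (i * a)⌋₊, ?_⟩, fun i d hd hx => ?_⟩
  · rw [Nat.floor_lt (by positivity), Nat.cast_ofNat]
    linarith [fract_lt_one ((i : ℝ) * a)]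
  have hfloor : ⌊4 * fract ((i + d : ℤ) * a)⌋ = ⌊4 * fract (i * a)⌋ := by
    rw [← natCast_floor_eq_floor (by positivity), ← natCast_floor_eq_floor (by positivity)]
    exact congrArg Nat.cast (Fin.mk.inj_iff.1 hx).symm
  have hclose : |fract ((i + d : ℤ) * a) - fract (i * a)| < 1 / 4 := by
    have := abs_sub_lt_one_of_floor_eq_floor hfloor
    rw [← mul_sub, abs_mul, abs_of_pos four_pos] at this
    linarith
  have hshift : fract (d * a) = fract (fract ((i + d : ℤ) * a) - fract (i * a)) := by
    refine fract_eq_fract.2 ⟨⌊((i + d : ℤ) : ℝ) * a⌋ - ⌊(i : ℝ) * a⌋, ?_⟩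
    push_cast [fract]
    ring
  exact (one_quarter_le_abs_of_fract_mem_Icc (hshift ▸ hD d hd)).not_gt hclose

/-- Katznelson: for every lacunary strictly increasing `f : ℕ → ℕ`
(there is `ε > 0` with `f (n+1) ≥ (1+ε) · f n` for all `n ≥ 1`), there is a finite
alphabet size `d` and a two-sided sequence `x : ℤ → Fin d` with `x i ≠ x (i + f n)`
for all `i ∈ ℤ` and `n ≥ 1`; in other words `X_{(d,f)} ≠ ∅` for some finite `d`. -/
theorem katznelson_lacunary_nonempty
    (f : ℕ → ℕ) (hf : StrictMono f)
    (hlac : ∃ ε : ℝ, 0 < ε ∧ ∀ n : ℕ, 1 ≤ n → (1 + ε) * (f n : ℝ) ≤ (f (n + 1) : ℝ)) :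
    ∃ d : ℕ, 1 ≤ d ∧ ∃ x : ℤ → Fin d,
      ∀ (i : ℤ) (n : ℕ), 1 ≤ n → x i ≠ x (i + (f n : ℤ)) := by
  obtain ⟨ε, hε, hlac⟩ := hlac
  obtain ⟨N, hN, hgrow⟩ := exists_pos_forall_mul_le_add_of_lacunary (f := fun n => (f (n + 1) : ℝ))
    3 (fun n => by positivity) hε (fun n => hlac (n + 1) le_add_self) (by norm_num)
  have hcolor (r : Fin N) : ∃ x : ℤ → Fin 4,
      IsDistanceColoring x (range fun k => (f (r + N * k + 1) : ℤ)) := by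
    obtain ⟨a, ha⟩ := exists_forall_fract_mul_mem_Icc (g := fun k => (f (r + N * k + 1) : ℝ))
      (by exact_mod_cast (Nat.zero_le _).trans_lt (hf (Nat.succ_pos _)))
      (fun k => by convert hgrow (r + N * k) using 4; ring)
    exact exists_fin_four_isDistanceColoring (by rintro _ ⟨k, rfl⟩; exact_mod_cast ha k)
  choose x hx using hcolor
  have hprod := ((IsDistanceColoring.pi hx).comp finFunctionFinEquiv.injective).mono
    (range_subset_iUnion_range_add_mul (fun n => (f (n + 1) : ℤ)) hN)
  refine ⟨4 ^ N, Nat.one_le_pow _ _ four_pos, finFunctionFinEquiv ∘ fun i r => x r i,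
    fun i n hn => ?_⟩
  obtain ⟨m, rfl⟩ := Nat.exists_eq_add_of_le' hn
  exact hprod i _ ⟨m, rfl⟩
end

section
/- (Betrand–Mathis) Let D ⊆ ℕ be nonempty. The following are equivalent: (i) D is a Poincaré sequence, i.e. for every probability space (Y, ℬ, μ), every measurable measure-preserving map T : Y → Y, and every measurable B with μ(B) > 0, there exists k ∈ D such that μ(T^{−k}B ∩ B) > 0; (ii) D is intersective, i.e. D ∩ (A − A) ≠ ∅ for every A ⊆ ℕ of positive upper density. -/
/-!
Intersective ⇒ Poincaré: the averages `N⁻¹ ∑_{n ≤ N} 1_B (T^n y)` all have integral `μ B > 0`,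
so by dominated convergence they cannot tend to `0` almost everywhere; hence on a set of positive
measure the return times `{n | T^n y ∈ B}` have positive upper density and contain two elements
`a'`, `a' + k` with `k ∈ D`, i.e. `T^{a'} y ∈ T^{-k} B ∩ B`. If all these sets were null, almost
every orbit would avoid them.

Poincaré ⇒ intersective (Furstenberg correspondence): encode `A` as a point of `{0,1}^ℕ` and take
a weak limit `μ` of the empirical measures `N⁻¹ ∑_{n ≤ N} δ_{σ^n x_A}` along an ultrafilter that
realises the limsup defining `upperDensity A`. Shifting changes the empirical measures by `O(1/N)`,
so `μ` is shift invariant, and since cylinders are clopen their masses are limits of densities: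
`μ {x | x 0} = d*(A)` and `μ (σ^{-k} {x | x 0} ∩ {x | x 0}) ≤ d*(A ∩ (A - k))`.
-/

open MeasureTheory

noncomputable def upperDensity (A : Set ℕ) : ℝ :=
  Filter.limsup (fun N : ℕ => (Nat.card ↥(A ∩ Set.Icc 1 N) : ℝ) / (N : ℝ)) Filter.atTop

open Filter Topology Set
open scoped ENNReal NNReal

noncomputable def partialDensity (A : Set ℕ) (N : ℕ) : ℝ :=
  (Nat.card ↥(A ∩ Icc 1 N) : ℝ) / N

theorem upperDensity_eq_limsup (A : Set ℕ) :
    upperDensity A = limsup (partialDensity A) atTop := rfl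

theorem partialDensity_eq_sum (A : Set ℕ) [DecidablePred (· ∈ A)] (N : ℕ) :
    partialDensity A N = (N : ℝ)⁻¹ * ∑ n ∈ Finset.Icc 1 N, if n ∈ A then 1 else 0 := by
  have hcard : Nat.card ↥(A ∩ Icc 1 N) = ({n ∈ Finset.Icc 1 N | n ∈ A} : Finset ℕ).card := by
    have : A ∩ Icc 1 N = ↑({n ∈ Finset.Icc 1 N | n ∈ A} : Finset ℕ) := by
      ext n
      simp only [mem_inter_iff, mem_Icc, Finset.coe_filter, Finset.mem_Icc, Set.mem_ofPred_eq]
      tauto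
    rw [this, Nat.card_coe_set_eq, ncard_coe_finset]
  rw [partialDensity, hcard, Finset.natCast_card_filter, div_eq_inv_mul]

theorem partialDensity_nonneg (A : Set ℕ) (N : ℕ) : 0 ≤ partialDensity A N := by
  unfold partialDensity; positivity

theorem partialDensity_le_one (A : Set ℕ) (N : ℕ) : partialDensity A N ≤ 1 := by
  have hcard : Nat.card ↥(A ∩ Icc 1 N) ≤ N := by
    calc Nat.card ↥(A ∩ Icc 1 N) ≤ Nat.card ↥(Icc 1 N) :=
          Nat.card_mono (finite_Icc 1 N) inter_subset_right
      _ = N := by simp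
  exact div_le_one_of_le₀ (by exact_mod_cast hcard) (Nat.cast_nonneg N)

theorem isBoundedUnder_le_partialDensity (A : Set ℕ) (l : Filter ℕ) :
    IsBoundedUnder (· ≤ ·) l (partialDensity A) :=
  isBoundedUnder_of ⟨1, partialDensity_le_one A⟩

theorem isCoboundedUnder_le_partialDensity (A : Set ℕ) (l : Filter ℕ) [l.NeBot] :
    IsCoboundedUnder (· ≤ ·) l (partialDensity A) :=
  (isBoundedUnder_of ⟨0, partialDensity_nonneg A⟩).isCoboundedUnder_le

theorem tendsto_partialDensity_zero {A : Set ℕ} (hA : upperDensity A ≤ 0) :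
    Tendsto (partialDensity A) atTop (𝓝 0) :=
  tendsto_of_le_liminf_of_limsup_le
    (le_liminf_of_le (isBoundedUnder_le_partialDensity A atTop).isCoboundedUnder_ge
      (Eventually.of_forall (partialDensity_nonneg A)))
    hA (isBoundedUnder_le_partialDensity A atTop)
    (isBoundedUnder_of ⟨0, partialDensity_nonneg A⟩)

theorem le_upperDensity_of_tendsto {A : Set ℕ} {l : Filter ℕ} [l.NeBot] (hl : l ≤ atTop)
    {c : ℝ} (h : Tendsto (partialDensity A) l (𝓝 c)) : c ≤ upperDensity A :=
  (h.mapClusterPt.mono hl).le_limsup (isBoundedUnder_le_partialDensity A atTop)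

theorem exists_ultrafilter_tendsto_upperDensity (A : Set ℕ) :
    ∃ V : Ultrafilter ℕ, (V : Filter ℕ) ≤ atTop ∧
      Tendsto (partialDensity A) (V : Filter ℕ) (𝓝 (upperDensity A)) :=
  mapClusterPt_iff_ultrafilter.mp <|
    MapClusterPt.limsup (isCoboundedUnder_le_partialDensity A atTop)
      (isBoundedUnder_le_partialDensity A atTop)

theorem upperDensity_empty : upperDensity ∅ = 0 := by
  have : partialDensity ∅ = fun _ ↦ 0 := funext fun N ↦ by simp [partialDensity]
  rw [upperDensity_eq_limsup, this, limsup_const]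

theorem nonempty_of_upperDensity_pos {A : Set ℕ} (hA : 0 < upperDensity A) : A.Nonempty :=
  nonempty_iff_ne_empty.mpr fun h ↦ hA.ne' (h ▸ upperDensity_empty)

theorem partialDensity_setOf_iterate_mem {Y : Type*} (T : Y → Y) (B : Set Y) (y : Y) (N : ℕ) :
    partialDensity {n | T^[n] y ∈ B} N =
      (N : ℝ)⁻¹ * ∑ n ∈ Finset.Icc 1 N, (T^[n] ⁻¹' B).indicator 1 y := by
  classical
  rw [partialDensity_eq_sum]
  simp [indicator_apply]

section Recurrence

variable {Y : Type*} [MeasurableSpace Y] {μ : Measure Y} {T : Y → Y} {B : Set Y}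

theorem integral_partialDensity_setOf_iterate_mem [IsFiniteMeasure μ]
    (hT : MeasurePreserving T μ μ) (hB : MeasurableSet B) {N : ℕ} (hN : N ≠ 0) :
    ∫ y, partialDensity {n | T^[n] y ∈ B} N ∂μ = μ.real B := by
  have hmeas : ∀ n, MeasurableSet (T^[n] ⁻¹' B) := fun n ↦ hT.measurable.iterate n hB
  simp_rw [partialDensity_setOf_iterate_mem]
  rw [integral_const_mul, integral_finsetSum _ fun n _ ↦
    (integrable_const 1).indicator (hmeas n)]
  simp_rw [integral_indicator_one (hmeas _), measureReal_def,
    (hT.iterate _).measure_preimage hB.nullMeasurableSet]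
  simp [hN]

theorem frequently_pos_upperDensity_setOf_iterate_mem [IsFiniteMeasure μ]
    (hT : MeasurePreserving T μ μ) (hB : MeasurableSet B) (hμB : 0 < μ B) :
    ∃ᵐ y ∂μ, 0 < upperDensity {n | T^[n] y ∈ B} := by
  by_contra h
  have h0 : ∀ᵐ y ∂μ, Tendsto (fun N ↦ partialDensity {n | T^[n] y ∈ B} N) atTop (𝓝 0) :=
    (not_frequently.mp h).mono fun y hy ↦ tendsto_partialDensity_zero (not_lt.mp hy)
  have hlim : Tendsto (fun N ↦ ∫ y, partialDensity {n | T^[n] y ∈ B} N ∂μ) atTop (𝓝 0) := by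
    refine integral_zero Y ℝ ▸ tendsto_integral_of_dominated_convergence (fun _ ↦ 1) (fun N ↦ ?_)
      (integrable_const 1) (fun N ↦ ?_) h0
    · simp_rw [partialDensity_setOf_iterate_mem]
      exact (Finset.measurable_sum _ fun n _ ↦ measurable_const.indicator
        (hT.measurable.iterate n hB)).const_mul _ |>.aestronglyMeasurable
    · refine Eventually.of_forall fun y ↦ ?_
      rw [Real.norm_of_nonneg (partialDensity_nonneg _ _)]
      exact partialDensity_le_one _ _
  have hconst : (fun N ↦ ∫ y, partialDensity {n | T^[n] y ∈ B} N ∂μ) =ᶠ[atTop] fun _ ↦ μ.real B :=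
    (eventually_ne_atTop 0).mono fun N hN ↦ integral_partialDensity_setOf_iterate_mem hT hB hN
  have : μ.real B = 0 := tendsto_nhds_unique tendsto_const_nhds (hlim.congr' hconst)
  exact hμB.ne' ((measureReal_eq_zero_iff).mp this)

end Recurrence

def IsIntersective (D : Set ℕ) : Prop :=
  ∀ A : Set ℕ, 0 < upperDensity A → ∃ k ∈ D, ∃ a ∈ A, ∃ a' ∈ A, a = a' + k

theorem IsIntersective.exists_mem_measure_iterate_preimage_inter_pos {D : Set ℕ}
    (hD : IsIntersective D) {Y : Type*} [MeasurableSpace Y] {μ : Measure Y} [IsFiniteMeasure μ]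
    {T : Y → Y} (hT : MeasurePreserving T μ μ) {B : Set Y} (hB : MeasurableSet B) (hμB : 0 < μ B) :
    ∃ k ∈ D, 0 < μ (T^[k] ⁻¹' B ∩ B) := by
  by_contra! h
  have hnull : ∀ᵐ y ∂μ, ∀ k : D, ∀ n, T^[n] y ∉ T^[k] ⁻¹' B ∩ B := by
    refine ae_all_iff.mpr fun k ↦ ae_all_iff.mpr fun n ↦ measure_eq_zero_iff_ae_notMem.mp ?_
    exact (hT.iterate n).quasiMeasurePreserving.preimage_null (nonpos_iff_eq_zero.mp (h k k.2))
  obtain ⟨y, hy, hyB⟩ :=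
    ((frequently_pos_upperDensity_setOf_iterate_mem hT hB hμB).and_eventually hnull).exists
  obtain ⟨k, hk, a, ha, a', ha', rfl⟩ := hD _ hy
  refine hyB ⟨k, hk⟩ a' ⟨?_, ha'⟩
  rwa [mem_preimage, ← Function.iterate_add_apply, add_comm]

open scoped BoundedContinuousFunction

namespace MeasureTheory.FiniteMeasure

variable {X : Type*} [MeasurableSpace X]

noncomputable def empirical (T : X → X) (x : X) (N : ℕ) : FiniteMeasure X :=
  ⟨(N : ℝ≥0)⁻¹ • ∑ n ∈ Finset.Icc 1 N, Measure.dirac (T^[n] x), inferInstance⟩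

theorem integral_empirical (T : X → X) (x : X) (N : ℕ) {f : X → ℝ}
    (hf : StronglyMeasurable f) :
    ∫ y, f y ∂(empirical T x N : Measure X) = (N : ℝ)⁻¹ * ∑ n ∈ Finset.Icc 1 N, f (T^[n] x) := by
  rw [empirical, FiniteMeasure.toMeasure_mk, integral_smul_nnreal_measure,
    integral_finsetSum_measure fun n _ ↦ integrable_dirac' hf enorm_lt_top]
  simp [integral_dirac' _ _ hf, NNReal.smul_def]

theorem mass_empirical (T : X → X) (x : X) {N : ℕ} (hN : N ≠ 0) :
    (empirical T x N).mass = 1 := by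
  rw [← ENNReal.coe_inj, ennreal_mass]
  simp [empirical, ENNReal.smul_def, ENNReal.coe_inv (Nat.cast_ne_zero.mpr hN),
    ENNReal.inv_mul_cancel, hN]

theorem integral_comp_sub_integral_empirical {T : X → X} (hT : Measurable T) (x : X) (N : ℕ)
    {f : X → ℝ} (hf : StronglyMeasurable f) :
    ∫ y, f (T y) ∂(empirical T x N : Measure X) - ∫ y, f y ∂(empirical T x N : Measure X) =
      (N : ℝ)⁻¹ * (f (T^[N + 1] x) - f (T x)) := by
  rw [integral_empirical T x N (f := fun y ↦ f (T y)) (hf.comp_measurable hT),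
    integral_empirical T x N hf, ← mul_sub, ← Finset.sum_sub_distrib]
  rcases Nat.eq_zero_or_pos N with rfl | hN
  · simp
  simp_rw [← Function.iterate_succ_apply' T]
  rw [Finset.sum_Icc_sub hN (fun n ↦ f (T^[n] x)), Function.iterate_one]

theorem tendsto_integral_comp_sub_integral_empirical [TopologicalSpace X]
    [OpensMeasurableSpace X] {T : X → X} (hT : Measurable T) (x : X) (f : X →ᵇ ℝ) :
    Tendsto (fun N ↦ ∫ y, f (T y) ∂(empirical T x N : Measure X) -
      ∫ y, f y ∂(empirical T x N : Measure X)) atTop (𝓝 0) := by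
  simp_rw [integral_comp_sub_integral_empirical hT x _ f.continuous.stronglyMeasurable]
  refine tendsto_inv_atTop_nhds_zero_nat.zero_mul_isBoundedUnder_le ?_
  exact isBoundedUnder_of ⟨2 * ‖f‖, fun N ↦ (dist_eq_norm _ _).symm.le.trans
    (f.dist_le_two_norm _ _)⟩

theorem measureReal_empirical (T : X → X) (x : X) (N : ℕ) {S : Set X} (hS : MeasurableSet S) :
    (empirical T x N : Measure X).real S = partialDensity {n | T^[n] x ∈ S} N := by
  rw [← integral_indicator_one hS, integral_empirical T x N (stronglyMeasurable_one.indicator hS),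
    partialDensity_setOf_iterate_mem]
  rfl

theorem mass_empirical_le_one (T : X → X) (x : X) (N : ℕ) : (empirical T x N).mass ≤ 1 := by
  rcases eq_or_ne N 0 with rfl | hN
  · simp [empirical, mass]
  · exact (mass_empirical T x hN).le

section WeakLimit

variable [TopologicalSpace X] {T : X → X} {x : X} {l : Filter ℕ} {μ : FiniteMeasure X}

theorem tendsto_measureReal_of_isClopen [OpensMeasurableSpace X] {ι : Type*} {l : Filter ι}
    {μs : ι → FiniteMeasure X} (h : Tendsto μs l (𝓝 μ)) {S : Set X} (hS : IsClopen S) :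
    Tendsto (fun i ↦ (μs i : Measure X).real S) l (𝓝 ((μ : Measure X).real S)) := by
  simpa only [BoundedContinuousFunction.indicator_apply,
    integral_indicator_one hS.isOpen.measurableSet]
    using tendsto_iff_forall_integral_tendsto.mp h (BoundedContinuousFunction.indicator S hS)

theorem exists_tendsto_empirical [T2Space X] [BorelSpace X] [CompactSpace X] (T : X → X)
    (x : X) (V : Ultrafilter ℕ) : ∃ μ : FiniteMeasure X, Tendsto (empirical T x) V (𝓝 μ) := by
  have hV : ↑(V.map (empirical T x)) ≤ 𝓟 {μ : FiniteMeasure X | μ.mass ≤ 1} := by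
    rw [Ultrafilter.coe_map, le_principal_iff]
    exact mem_map.mpr (univ_mem' fun N ↦ mass_empirical_le_one T x N)
  obtain ⟨μ, -, hμ⟩ :=
    (isCompact_setOfPred_finiteMeasure_le_of_compactSpace X 1).ultrafilter_le_nhds _ hV
  exact ⟨μ, hμ⟩

theorem isProbabilityMeasure_of_tendsto_empirical [OpensMeasurableSpace X] [l.NeBot]
    (hl : l ≤ atTop) (h : Tendsto (empirical T x) l (𝓝 μ)) :
    IsProbabilityMeasure (μ : Measure X) := by
  have hmass : μ.mass = 1 :=
    tendsto_nhds_unique ((continuous_mass.tendsto μ).comp h)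
      (tendsto_const_nhds.congr' (((eventually_ne_atTop 0).filter_mono hl).mono
        fun N hN ↦ (mass_empirical T x hN).symm))
  exact ⟨by rw [← ennreal_mass, hmass, ENNReal.coe_one]⟩

theorem measurePreserving_of_tendsto_empirical [HasOuterApproxClosed X] [BorelSpace X] [l.NeBot]
    (hT : Continuous T) (hl : l ≤ atTop) (h : Tendsto (empirical T x) l (𝓝 μ)) :
    MeasurePreserving T μ μ := by
  refine ⟨hT.measurable, ext_of_forall_integral_eq_of_IsFiniteMeasure fun f ↦ ?_⟩
  rw [integral_map hT.aemeasurable f.continuous.aestronglyMeasurable]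
  have hcomp := tendsto_iff_forall_integral_tendsto.mp h (f.compContinuous ⟨T, hT⟩)
  have hf := tendsto_iff_forall_integral_tendsto.mp h f
  exact sub_eq_zero.mp (tendsto_nhds_unique (hcomp.sub hf)
    ((tendsto_integral_comp_sub_integral_empirical hT.measurable x f).mono_left hl))

end WeakLimit

end MeasureTheory.FiniteMeasure

def shift (x : ℕ → Bool) : ℕ → Bool := fun n ↦ x (n + 1)

theorem continuous_shift : Continuous shift := continuous_pi fun n ↦ continuous_apply (n + 1)

theorem shift_iterate_apply (m : ℕ) (x : ℕ → Bool) (n : ℕ) : shift^[m] x n = x (n + m) := by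
  induction m generalizing x with
  | zero => rfl
  | succ m ih => rw [Function.iterate_succ_apply, ih, shift, add_assoc]

theorem isClopen_setOf_apply_eq (n : ℕ) (b : Bool) : IsClopen {x : ℕ → Bool | x n = b} :=
  (isClopen_discrete {b}).preimage (continuous_apply n)

theorem furstenberg_correspondence (A : Set ℕ) :
    ∃ μ : Measure (ℕ → Bool), IsProbabilityMeasure μ ∧ MeasurePreserving shift μ μ ∧
      μ {x | x 0 = true} = ENNReal.ofReal (upperDensity A) ∧
      ∀ k, μ (shift^[k] ⁻¹' {x | x 0 = true} ∩ {x | x 0 = true}) ≤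
        ENNReal.ofReal (upperDensity {n | n ∈ A ∧ n + k ∈ A}) := by
  classical
  set x : ℕ → Bool := fun n ↦ decide (n ∈ A)
  have hx : ∀ n, shift^[n] x ∈ {x | x 0 = true} ↔ n ∈ A := fun n ↦ by
    simp [shift_iterate_apply, x]
  obtain ⟨V, hV, hVA⟩ := exists_ultrafilter_tendsto_upperDensity A
  obtain ⟨μ, hμ⟩ := FiniteMeasure.exists_tendsto_empirical shift x V
  have hlim : ∀ S, IsClopen S →
      Tendsto (partialDensity {n | shift^[n] x ∈ S}) V (𝓝 ((μ : Measure _).real S)) := by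
    intro S hS
    simpa only [FiniteMeasure.measureReal_empirical _ _ _ hS.isOpen.measurableSet] using
      FiniteMeasure.tendsto_measureReal_of_isClopen hμ hS
  refine ⟨μ, FiniteMeasure.isProbabilityMeasure_of_tendsto_empirical hV hμ,
    FiniteMeasure.measurePreserving_of_tendsto_empirical continuous_shift hV hμ, ?_, fun k ↦ ?_⟩
  · have hB := hlim _ (isClopen_setOf_apply_eq 0 true)
    simp only [hx, ofPred_mem_eq] at hB
    rw [← ofReal_measureReal, tendsto_nhds_unique hB hVA]
  · rw [← ofReal_measureReal]
    refine ENNReal.ofReal_le_ofReal (le_upperDensity_of_tendsto hV ?_)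
    have hS := hlim _ (((isClopen_setOf_apply_eq 0 true).preimage
      (continuous_shift.iterate k)).inter (isClopen_setOf_apply_eq 0 true))
    convert hS using 2
    ext n
    rw [mem_ofPred_eq, mem_ofPred_eq, mem_inter_iff, mem_preimage, ← Function.iterate_add_apply,
      hx, hx, add_comm, and_comm]

theorem betrand_mathis_general (D : Set ℕ) :
    (∀ (Y : Type) (_ : MeasurableSpace Y) (μ : Measure Y),
        IsProbabilityMeasure μ →
        ∀ T : Y → Y, MeasurePreserving T μ μ →
        ∀ B : Set Y, MeasurableSet B → 0 < μ B →
        ∃ k ∈ D, 0 < μ ((T^[k]) ⁻¹' B ∩ B)) ↔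
    (∀ A : Set ℕ, 0 < upperDensity A → ∃ k ∈ D, ∃ a ∈ A, ∃ a' ∈ A, a = a' + k) := by
  refine ⟨fun hD A hA ↦ ?_, fun hD Y _ μ _ T hT B hB hμB ↦
    IsIntersective.exists_mem_measure_iterate_preimage_inter_pos hD hT hB hμB⟩
  obtain ⟨μ, hμ, hshift, hμB, hμk⟩ := furstenberg_correspondence A
  obtain ⟨k, hk, hkpos⟩ := hD _ _ μ hμ shift hshift _
    (isClopen_setOf_apply_eq 0 true).isOpen.measurableSet
    (hμB ▸ ENNReal.ofReal_pos.mpr hA)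
  obtain ⟨n, hn, hnk⟩ := nonempty_of_upperDensity_pos
    (ENNReal.ofReal_pos.mp (hkpos.trans_le (hμk k)))
  exact ⟨k, hk, n + k, hnk, n, hn, rfl⟩

/-- Betrand–Mathis: a nonempty set `D` of positive integers is a Poincaré
sequence (for every probability space `(Y,ℬ,μ)`, measurable measure-preserving
`T : Y → Y` and measurable `B` with `μ B > 0` there is `k ∈ D` with
`μ (T^{-k} B ∩ B) > 0`) if and only if `D` is intersective
(`D ∩ (A − A) ≠ ∅` for every `A ⊆ ℕ` of positive upper density). -/
theorem betrand_mathis (D : Set ℕ) (hD : D.Nonempty) (hD1 : ∀ k ∈ D, 1 ≤ k) :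
    (∀ (Y : Type) (_ : MeasurableSpace Y) (μ : Measure Y),
        IsProbabilityMeasure μ →
        ∀ T : Y → Y, MeasurePreserving T μ μ →
        ∀ B : Set Y, MeasurableSet B → 0 < μ B →
        ∃ k ∈ D, 0 < μ ((T^[k]) ⁻¹' B ∩ B)) ↔
    (∀ A : Set ℕ, 0 < upperDensity A → ∃ k ∈ D, ∃ a ∈ A, ∃ a' ∈ A, a = a' + k) :=
  betrand_mathis_general D
end

section
/- Fix an integer r ≥ 2 and let f(n) = n^r. Then there is no one-sided sequence x : ℕ → Fin 2 with x_i ≠ x_{i+n^r} for all i, n ∈ ℕ; in particular X_{(2,n^r)} = ∅. -/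
/-! The jump `1 = 1 ^ r` alone forces a two-colouring to alternate, so it repeats after every
even number of steps; but `2 ^ r` is an even jump. A two-sided solution would restrict to a
one-sided one. -/

lemma Fin.two_eq_of_ne_of_ne : ∀ {a b c : Fin 2}, a ≠ b → b ≠ c → a = c := by decide

theorem Fin.two_apply_add_even_of_ne_succ {x : ℕ → Fin 2} {m : ℕ}
    (hx : ∀ i, m ≤ i → x i ≠ x (i + 1)) {e : ℕ} (he : Even e) : x (m + e) = x m := by
  obtain ⟨k, rfl⟩ := he
  induction k with
  | zero => rfl
  | succ k ih =>
    rw [show m + (k + 1 + (k + 1)) = m + (k + k) + 1 + 1 by omega, ← ih]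
    exact (Fin.two_eq_of_ne_of_ne (hx _ (by omega)) (hx _ (by omega))).symm

/-- fix an integer `r ≥ 2` and take the jump sequence `f n = n^r`. There
is no one-sided sequence `x : ℕ → Fin 2` with `x i ≠ x (i + n^r)` for all `i, n ≥ 1`;
in particular the two-sided space `X_{(2,n^r)}` is empty. -/
theorem two_symbols_power_jump_empty (r : ℕ) (hr : 2 ≤ r) :
    (¬ ∃ x : ℕ → Fin 2, ∀ i n : ℕ, 1 ≤ i → 1 ≤ n → x i ≠ x (i + n ^ r)) ∧
    (¬ ∃ x : ℤ → Fin 2, ∀ (i : ℤ) (n : ℕ), 1 ≤ n → x i ≠ x (i + (n : ℤ) ^ r)) := by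
  have one_sided : ¬ ∃ x : ℕ → Fin 2, ∀ i n : ℕ, 1 ≤ i → 1 ≤ n → x i ≠ x (i + n ^ r) := by
    rintro ⟨x, hx⟩
    have alternating : ∀ i, 1 ≤ i → x i ≠ x (i + 1) := fun i hi => by
      simpa using hx i 1 hi le_rfl
    have even_jump : Even (2 ^ r) := (Nat.even_pow' (by omega)).mpr even_two
    exact hx 1 2 le_rfl one_le_two
      (Fin.two_apply_add_even_of_ne_succ alternating even_jump).symm
  refine ⟨one_sided, ?_⟩
  rintro ⟨x, hx⟩
  exact one_sided ⟨fun i => x i, fun i n _ hn => by exact_mod_cast hx i n hn⟩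
end

section
/- Let d ≥ 2, let p_i be the probability that d+i−1 i.i.d. uniform symbols from a d-letter alphabet contain every letter, and let (B_j)_{j≥1} be independent events on a probability space with P(B_j) = 0 for j ≤ d² and P(B_j) = p_i for j in the i-th interval (d+i−1)² < j ≤ (d+i)²; let T = min{j : B_j occurs}. Then the halting time distribution has an exponential tail: there exist constants C and c > 0 with P(T = j) ≤ C·e^{−c·j} for all j ≥ 1; moreover T is almost surely finite, i.e. P(B_j occurs for some j) = 1. -/
/-!
Every full-block probability `p_i` is at least `p = d!/d^d`: prepending a letter to a surjective
word keeps it surjective, and the surjective words of length `d` are the `d!` permutations. For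
`d ≥ 2` this `p` lies in `(0, 1)`, so each `B_k` with `k > d²` fails with probability at most
`q = 1 - p < 1`. By independence the event that all `B_k`, `d² < k < j`, fail has probability at
most `q^(j-1-d²)`; it contains both `{T = j}` and, letting `j → ∞`, `{T = ∞}`.
-/

open MeasureTheory ProbabilityTheory

/-- The full-block probability `p_i` for alphabet size `d`: the probability that
`d+i−1` i.i.d. symbols, each uniform on a `d`-letter alphabet, contain every letter;
equivalently the number of surjections from a `(d+i−1)`-set onto a `d`-set divided by
`d^(d+i−1)`. -/
noncomputable def fullBlockProb (d i : ℕ) : ℝ :=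
  (Nat.card {g : Fin (d + i - 1) → Fin d // Function.Surjective g} : ℝ) /
    (d : ℝ) ^ (d + i - 1)

open Filter Function
open scoped Nat

lemma Nat.factorial_lt_pow_self {n : ℕ} (hn : 2 ≤ n) : n ! < n ^ n := by
  obtain ⟨m, rfl⟩ : ∃ m, n = m + 1 := ⟨n - 1, by omega⟩
  calc (m + 1)! = (m + 1) * m ! := factorial_succ m
    _ ≤ (m + 1) * m ^ m := Nat.mul_le_mul_left _ m.factorial_le_pow
    _ < (m + 1) * (m + 1) ^ m := by gcongr <;> omega
    _ = (m + 1) ^ (m + 1) := by ring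

lemma mul_card_surjective_fin_le_card_surjective_fin_succ (n d : ℕ) :
    d * Nat.card {g : Fin n → Fin d // Surjective g} ≤
      Nat.card {g : Fin (n + 1) → Fin d // Surjective g} := by
  let cons : Fin d × {g : Fin n → Fin d // Surjective g} →
      {g : Fin (n + 1) → Fin d // Surjective g} :=
    fun x => ⟨Fin.cons x.1 x.2.1, fun y =>
      let ⟨z, hz⟩ := x.2.2 y
      ⟨z.succ, by simpa using hz⟩⟩
  have hcons : Injective cons := fun x y h => by
    obtain ⟨h₁, h₂⟩ := (Fin.cons_inj (α := fun _ => Fin d)).1 (congrArg Subtype.val h)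
    exact Prod.ext h₁ (Subtype.ext h₂)
  simpa [Nat.card_prod] using Nat.card_le_card_of_injective cons hcons

lemma factorial_le_card_surjective_fin (d : ℕ) :
    d ! ≤ Nat.card {g : Fin d → Fin d // Surjective g} := by
  have hinj : Injective fun σ : Equiv.Perm (Fin d) =>
      (⟨σ, σ.surjective⟩ : {g : Fin d → Fin d // Surjective g}) :=
    fun σ τ h => Equiv.coe_fn_injective (congrArg Subtype.val h)
  simpa [Fintype.card_perm] using Nat.card_le_card_of_injective _ hinj

lemma pow_mul_factorial_le_card_surjective_fin (d m : ℕ) :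
    d ^ m * d ! ≤ Nat.card {g : Fin (d + m) → Fin d // Surjective g} := by
  induction m with
  | zero => simpa using factorial_le_card_surjective_fin d
  | succ m ih =>
    calc d ^ (m + 1) * d ! = d * (d ^ m * d !) := by ring
      _ ≤ d * Nat.card {g : Fin (d + m) → Fin d // Surjective g} := Nat.mul_le_mul_left d ih
      _ ≤ _ := mul_card_surjective_fin_le_card_surjective_fin_succ (d + m) d

lemma factorial_div_pow_le_fullBlockProb {d i : ℕ} (hd : 0 < d) (hi : 1 ≤ i) :
    (d ! : ℝ) / d ^ d ≤ fullBlockProb d i := by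
  obtain ⟨m, rfl⟩ := Nat.exists_eq_add_of_le hi
  rw [fullBlockProb, show d + (1 + m) - 1 = d + m by omega,
    div_le_div_iff₀ (by positivity) (by positivity)]
  calc (d ! : ℝ) * d ^ (d + m) = (d ^ m * d ! : ℕ) * d ^ d := by push_cast; ring
    _ ≤ _ := by gcongr; exact pow_mul_factorial_le_card_surjective_fin d m

lemma exists_sq_lt_le_sq_of_sq_lt {d k : ℕ} (hk : d ^ 2 < k) :
    ∃ i, 1 ≤ i ∧ (d + i - 1) ^ 2 < k ∧ k ≤ (d + i) ^ 2 := by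
  set m := Nat.sqrt (k - 1)
  have hlo : m ^ 2 ≤ k - 1 := Nat.sqrt_le' _
  have hhi : k - 1 < (m + 1) ^ 2 := Nat.lt_succ_sqrt' _
  have hdm : d ≤ m := Nat.le_sqrt'.2 (by omega)
  refine ⟨m + 1 - d, by omega, ?_, ?_⟩
  · rw [show d + (m + 1 - d) - 1 = m by omega]; omega
  · rw [show d + (m + 1 - d) = m + 1 by omega]; omega

namespace ProbabilityTheory.iIndepSet

variable {Ω : Type*} [MeasurableSpace Ω] {μ : Measure Ω} {B : ℕ → Set Ω}

lemma measure_biInter_compl_le (hB : iIndepSet B μ) (s : Finset ℕ) {q : ENNReal}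
    (hq : ∀ k ∈ s, μ (B k)ᶜ ≤ q) : μ (⋂ k ∈ s, (B k)ᶜ) ≤ q ^ s.card := by
  rw [((iIndepSet_iff_iIndep B μ).1 hB).meas_biInter fun k _ =>
    (MeasurableSpace.measurableSet_generateFrom (Set.mem_singleton _)).compl]
  exact Finset.prod_le_pow_card s _ q hq

lemma measure_biInter_compl_Ioc_le (hB : iIndepSet B μ) {N : ℕ} {q : ℝ} (hq : 0 ≤ q)
    (hBq : ∀ k, N < k → μ (B k)ᶜ ≤ ENNReal.ofReal q) (M : ℕ) :
    μ (⋂ k ∈ Finset.Ioc N M, (B k)ᶜ) ≤ ENNReal.ofReal (q ^ (M - N)) := by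
  rw [ENNReal.ofReal_pow hq, ← Nat.card_Ioc]
  exact hB.measure_biInter_compl_le _ fun k hk => hBq k (Finset.mem_Ioc.1 hk).1

lemma exists_measure_firstHit_le_exp (hB : iIndepSet B μ) {N : ℕ} {q : ℝ} (hq₀ : 0 < q)
    (hq₁ : q < 1) (hBq : ∀ k, N < k → μ (B k)ᶜ ≤ ENNReal.ofReal q) :
    ∃ C c : ℝ, 0 < c ∧ ∀ j : ℕ,
      μ {ω | ω ∈ B j ∧ ∀ k : ℕ, 1 ≤ k → k < j → ω ∉ B k}
        ≤ ENNReal.ofReal (C * Real.exp (-(c * j))) := by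
  refine ⟨q⁻¹ ^ (N + 1), -Real.log q, neg_pos.2 (Real.log_neg hq₀ hq₁), fun j => ?_⟩
  have hsub : {ω | ω ∈ B j ∧ ∀ k : ℕ, 1 ≤ k → k < j → ω ∉ B k} ⊆
      ⋂ k ∈ Finset.Ioc N (j - 1), (B k)ᶜ := fun ω hω => by
    simp only [Set.mem_iInter, Finset.mem_Ioc]
    exact fun k hk => hω.2 k (by omega) (by omega)
  refine (measure_mono hsub).trans <| (hB.measure_biInter_compl_Ioc_le hq₀.le hBq _).trans <|
    ENNReal.ofReal_le_ofReal ?_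
  calc q ^ (j - 1 - N) = q⁻¹ ^ (N + 1) * q ^ (j - 1 - N + (N + 1)) := by
        rw [pow_add q, mul_left_comm, ← mul_pow, inv_mul_cancel₀ hq₀.ne', one_pow, mul_one]
    _ ≤ q⁻¹ ^ (N + 1) * q ^ j :=
        mul_le_mul_of_nonneg_left (pow_le_pow_of_le_one hq₀.le hq₁.le (by omega)) (by positivity)
    _ = q⁻¹ ^ (N + 1) * Real.exp (-(-Real.log q * j)) := by
        rw [neg_mul, neg_neg, ← Real.rpow_def_of_pos hq₀, Real.rpow_natCast]

lemma measure_iUnion_eq_one (hB : iIndepSet B μ) (hBmeas : ∀ j, MeasurableSet (B j)) {N : ℕ}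
    {q : ℝ} (hq₀ : 0 ≤ q) (hq₁ : q < 1) (hBq : ∀ k, N < k → μ (B k)ᶜ ≤ ENNReal.ofReal q) :
    μ (⋃ j : ℕ, ⋃ _ : 1 ≤ j, B j) = 1 := by
  have := hB.isProbabilityMeasure
  rw [← prob_compl_eq_zero_iff (.iUnion fun j => .iUnion fun _ => hBmeas j)]
  have hlim : Tendsto (fun M => ENNReal.ofReal (q ^ (M - N))) atTop (nhds 0) := by
    rw [← ENNReal.ofReal_zero]
    exact ENNReal.tendsto_ofReal
      ((tendsto_pow_atTop_nhds_zero_of_lt_one hq₀ hq₁).comp (tendsto_sub_atTop_nat N))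
  refine le_antisymm (ge_of_tendsto' hlim fun M => ?_) zero_le
  refine (measure_mono fun ω hω => ?_).trans (hB.measure_biInter_compl_Ioc_le hq₀ hBq M)
  simp only [Set.mem_compl_iff, Set.mem_iUnion, not_exists, Set.mem_iInter,
    Finset.mem_Ioc] at hω ⊢
  exact fun k hk => hω k (by omega)

end ProbabilityTheory.iIndepSet

theorem halting_exponential_tail_and_as_finite_general
    {Ω : Type} [MeasurableSpace Ω] (μ : Measure Ω) [IsProbabilityMeasure μ]
    (d : ℕ) (hd : 2 ≤ d)
    (B : ℕ → Set Ω) (hBmeas : ∀ j, MeasurableSet (B j))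
    (hindep : iIndepSet B μ)
    (hBi : ∀ i : ℕ, 1 ≤ i → ∀ j : ℕ, (d + i - 1) ^ 2 < j → j ≤ (d + i) ^ 2 →
        μ (B j) = ENNReal.ofReal (fullBlockProb d i)) :
    (∃ C c : ℝ, 0 < c ∧ ∀ j : ℕ, 1 ≤ j →
        μ {ω | ω ∈ B j ∧ ∀ k : ℕ, 1 ≤ k → k < j → ω ∉ B k}
          ≤ ENNReal.ofReal (C * Real.exp (-(c * (j : ℝ))))) ∧
    μ (⋃ j : ℕ, ⋃ _ : 1 ≤ j, B j) = 1 := by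
  set p : ℝ := d ! / d ^ d
  have hp₀ : 0 < p := by positivity
  have hp₁ : p < 1 :=
    (div_lt_one (by positivity)).2 (by exact_mod_cast Nat.factorial_lt_pow_self hd)
  have hcompl : ∀ k, d ^ 2 < k → μ (B k)ᶜ ≤ ENNReal.ofReal (1 - p) := fun k hk => by
    obtain ⟨i, hi, hlo, hhi⟩ := exists_sq_lt_le_sq_of_sq_lt hk
    rw [prob_compl_eq_one_sub (hBmeas k), hBi i hi k hlo hhi, ENNReal.ofReal_sub _ hp₀.le,
      ENNReal.ofReal_one]
    exact tsub_le_tsub_left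
      (ENNReal.ofReal_le_ofReal (factorial_div_pow_le_fullBlockProb (by omega) hi)) 1
  obtain ⟨C, c, hc, htail⟩ :=
    hindep.exists_measure_firstHit_le_exp (by linarith) (by linarith) hcompl
  exact ⟨⟨C, c, hc, fun j _ => htail j⟩,
    hindep.measure_iUnion_eq_one hBmeas (by linarith) (by linarith) hcompl⟩

/-- in the probabilistic model with independent halting events `(B_j)`
(`P(B_j) = 0` for `j ≤ d²` and `P(B_j) = p_i` for `j` in the `i`-th interval
`(d+i−1)² < j ≤ (d+i)²`, with `p_i` the full-block probability), the halting time
distribution has an exponential tail: there are constants `C` and `c > 0` with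
`P(T = j) ≤ C·e^{−c·j}` for all `j ≥ 1`; moreover the halting time is almost surely
finite: `P(B_j occurs for some j ≥ 1) = 1`. -/
theorem halting_exponential_tail_and_as_finite
    {Ω : Type} [MeasurableSpace Ω] (μ : Measure Ω) [IsProbabilityMeasure μ]
    (d : ℕ) (hd : 2 ≤ d)
    (B : ℕ → Set Ω) (hBmeas : ∀ j, MeasurableSet (B j))
    (hindep : iIndepSet B μ)
    (hB0 : ∀ j : ℕ, 1 ≤ j → j ≤ d ^ 2 → μ (B j) = 0)
    (hBi : ∀ i : ℕ, 1 ≤ i → ∀ j : ℕ, (d + i - 1) ^ 2 < j → j ≤ (d + i) ^ 2 →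
        μ (B j) = ENNReal.ofReal (fullBlockProb d i)) :
    (∃ C c : ℝ, 0 < c ∧ ∀ j : ℕ, 1 ≤ j →
        μ {ω | ω ∈ B j ∧ ∀ k : ℕ, 1 ≤ k → k < j → ω ∉ B k}
          ≤ ENNReal.ofReal (C * Real.exp (-(c * (j : ℝ))))) ∧
    μ (⋃ j : ℕ, ⋃ _ : 1 ≤ j, B j) = 1 :=
  halting_exponential_tail_and_as_finite_general μ d hd B hBmeas hindep hBi
end

section
/- Fix an alphabet size d ≥ 1 and the jump sequence f(n) = n². Let x be a sequence of symbols from a d-letter alphabet, let n ≥ 1, and suppose that at the site j = i + n² the dragnet entries reached by jumps of size at least n support the full alphabet: the set of symbols {x_{j−m²} : m ≥ n, j − m² ≥ 1} has cardinality d. Then i ≥ d² + 2(n−1)·d − 2(n−1); that is, the staircase jump at level n in the (i,n)-plot is located at i = d² + 2(n−1)·d − 2(n−1), and consecutive staircase steps differ by 2(d−1). -/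
/-!
Every symbol in the dragnet at `N = i + n²` is read off through a jump `m²` with `n ≤ m` and
`m² < N`. If `N ≤ (n + d - 1)²` only the `d - 1` jumps `n, …, n + d - 2` qualify, so at most
`d - 1` symbols appear. Hence full support forces `(n + d - 1)² < i + n²`, which is the stated
bound after expanding the square; the bound is `d² + 2n(d - 1)` at level `n + 1`, so its steps are
`2(d - 1)`.
-/

theorem ncard_jump_symbols_le {α : Type*} (x : ℕ → α) {n k N : ℕ} (hN : N ≤ (n + k) ^ 2) :
    Nat.card {s : α | ∃ m : ℕ, n ≤ m ∧ m ^ 2 < N ∧ s = x (N - m ^ 2)} ≤ k := by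
  have himage : {s : α | ∃ m : ℕ, n ≤ m ∧ m ^ 2 < N ∧ s = x (N - m ^ 2)} =
      (fun m => x (N - m ^ 2)) '' {m | n ≤ m ∧ m ^ 2 < N} := by
    ext s
    simp only [Set.mem_ofPred_eq, Set.mem_image, and_assoc, eq_comm]
  have hjumps : {m | n ≤ m ∧ m ^ 2 < N} ⊆ Set.Ico n (n + k) := fun m ⟨hnm, hm⟩ =>
    ⟨hnm, (Nat.pow_lt_pow_iff_left two_ne_zero).mp (hm.trans_le hN)⟩
  calc Nat.card {s : α | ∃ m : ℕ, n ≤ m ∧ m ^ 2 < N ∧ s = x (N - m ^ 2)}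
      _ = ((fun m => x (N - m ^ 2)) '' {m | n ≤ m ∧ m ^ 2 < N}).ncard := by
        rw [himage, Nat.card_coe_set_eq]
      _ ≤ {m | n ≤ m ∧ m ^ 2 < N}.ncard := Set.ncard_image_le ((Set.finite_Ico _ _).subset hjumps)
      _ ≤ (Set.Ico n (n + k)).ncard := Set.ncard_le_ncard hjumps
      _ = k := by simp

theorem sq_lt_of_ncard_jump_symbols {α : Type*} (x : ℕ → α) {n d N : ℕ} (hd : 1 ≤ d)
    (hfull : d ≤ Nat.card {s : α | ∃ m : ℕ, n ≤ m ∧ m ^ 2 < N ∧ s = x (N - m ^ 2)}) :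
    (n + (d - 1)) ^ 2 < N := by
  by_contra! hN
  have := ncard_jump_symbols_le x hN
  omega

/-- Truncated subtraction makes this hold also for `d = 0`. -/
theorem staircase_eq (d n : ℕ) : d ^ 2 + 2 * n * d - 2 * n = d ^ 2 + 2 * n * (d - 1) := by
  rcases d with _ | d
  · simp
  · rw [Nat.add_sub_cancel, mul_add_one, ← add_assoc, Nat.add_sub_cancel]

theorem staircase_le_of_sq_lt {d n i : ℕ} (hn : 1 ≤ n)
    (h : (n + (d - 1)) ^ 2 < i + n ^ 2) : d ^ 2 + 2 * (n - 1) * d - 2 * (n - 1) ≤ i := by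
  obtain ⟨a, rfl⟩ : ∃ a, n = a + 1 := ⟨n - 1, by omega⟩
  rw [staircase_eq]
  rcases d with _ | b
  · simp
  · simp only [Nat.add_sub_cancel] at h ⊢
    nlinarith

theorem staircase_succ_sub (d n : ℕ) (hn : 1 ≤ n) :
    (d ^ 2 + 2 * n * d - 2 * n) - (d ^ 2 + 2 * (n - 1) * d - 2 * (n - 1)) = 2 * (d - 1) := by
  obtain ⟨a, rfl⟩ : ∃ a, n = a + 1 := ⟨n - 1, by omega⟩
  rw [staircase_eq, staircase_eq, Nat.add_sub_cancel]
  have : 2 * (a + 1) * (d - 1) = 2 * a * (d - 1) + 2 * (d - 1) := by ring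
  omega

theorem staircase_location_general
    (d : ℕ) (hd : 1 ≤ d) (x : ℕ → Fin d) (i n : ℕ) (hn : 1 ≤ n)
    (hfull : Nat.card
        ↥{s : Fin d | ∃ m : ℕ, n ≤ m ∧ m ^ 2 < i + n ^ 2 ∧ s = x (i + n ^ 2 - m ^ 2)}
      = d) :
    (d ^ 2 + 2 * (n - 1) * d - 2 * (n - 1) ≤ i) ∧
    (∀ n' : ℕ, 1 ≤ n' →
      (d ^ 2 + 2 * n' * d - 2 * n') - (d ^ 2 + 2 * (n' - 1) * d - 2 * (n' - 1))
        = 2 * (d - 1)) :=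
  ⟨staircase_le_of_sq_lt hn (sq_lt_of_ncard_jump_symbols x hd hfull.ge),
    staircase_succ_sub d⟩

/-- STATEMENT 19: fix alphabet size `d ≥ 1` and the jump sequence `f n = n²`. Let `x`
be a sequence of symbols from the `d`-letter alphabet, let `n ≥ 1`, and suppose that at
the site `j = i + n²` the dragnet entries reached by jumps of size at least `n` support
the full alphabet: the set of symbols `{x (j − m²) : m ≥ n, j − m² ≥ 1}` has
cardinality `d`. Then `i ≥ d² + 2(n−1)·d − 2(n−1)`; i.e. the staircase jump at level
`n` in the `(i,n)`-plot is at `i = d² + 2(n−1)·d − 2(n−1)`, consecutive staircase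
steps differing by `2(d−1)`. -/
theorem staircase_location
    (d : ℕ) (hd : 1 ≤ d) (x : ℕ → Fin d) (i n : ℕ) (hi : 1 ≤ i) (hn : 1 ≤ n)
    (hfull : Nat.card
        ↥{s : Fin d | ∃ m : ℕ, n ≤ m ∧ m ^ 2 < i + n ^ 2 ∧ s = x (i + n ^ 2 - m ^ 2)}
      = d) :
    (d ^ 2 + 2 * (n - 1) * d - 2 * (n - 1) ≤ i) ∧
    (∀ n' : ℕ, 1 ≤ n' →
      (d ^ 2 + 2 * n' * d - 2 * n') - (d ^ 2 + 2 * (n' - 1) * d - 2 * (n' - 1))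
        = 2 * (d - 1)) :=
  staircase_location_general d hd x i n hn hfull
end
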